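/- arXiv:2110.09089 — 3 statements merged into one kernel-verified Lean document; each statement's English description precedes it below -/
import Mathlib

section
/- Let (a,b) ∈ {(2,0), (2,2)} ⊆ (ℤ/4ℤ)², i.e., θ = a + bw ∈ {2, 2+2w}, and R = R_θ. Then (2) = (2+2w) and (w) = (3w) = (2+w) = (2+3w) as ideals of R, and R has exactly five ideals, which form the chain (0) ⊊ (2w) ⊊ (2) ⊊ (w) ⊊ R. -/
open Polynomial

/-- The base ring ℤ/4ℤ. -/
abbrev Z4 := ZMod 4

/-- The polynomial X² − (a + bX) over ℤ/4ℤ. -/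
noncomputable def wPoly (a b : Z4) : Z4[X] := X ^ 2 - (C b * X + C a)

/-- The ring R_{a+bw} = (ℤ/4ℤ)[X]/(X² − (a + bX)); every element is uniquely
x₀ + x₁·w with x₀, x₁ ∈ ℤ/4ℤ, and w² = a + b·w. -/
abbrev Rw (a b : Z4) : Type := AdjoinRoot (wPoly a b)

/-- The element w of R_{a+bw}. -/
noncomputable def ww (a b : Z4) : Rw a b := AdjoinRoot.root _

/-! Write θ = 2 + 2cw (c = 0 or 1). Since 4 = 0, w² = 2(1 + cw), w³ = 2w and w⁴ = 0; in
particular 2 = w(w − 2c). Hence an element c₀ + wy is a unit when c₀ is odd (a unit plus a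
nilpotent) and a multiple of w when c₀ is even. In a commutative ring where every element is a
unit or a multiple of a nilpotent π, every ideal is some (πⁿ), and these strictly decrease until
πⁿ = 0. Here this gives R ⊋ (w) ⊋ (w²) = (2) ⊋ (w³) = (2w) ⊋ (w⁴) = 0, and each alternative
generator in the statement is w or 2 times 1 plus a multiple of w. -/

section NilpotentPrincipalMaximal

variable {R : Type*} [CommRing R] {π : R}

theorem Ideal.eq_span_pow_or_le_span_pow_succ (hπ : ∀ x : R, IsUnit x ∨ π ∣ x) {I : Ideal R}
    {n : ℕ} (hI : I ≤ Ideal.span {π ^ n}) :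
    I = Ideal.span {π ^ n} ∨ I ≤ Ideal.span {π ^ (n + 1)} := by
  by_cases h : I ≤ Ideal.span {π ^ (n + 1)}
  · exact Or.inr h
  obtain ⟨x, hxI, hx⟩ := Set.not_subset.mp h
  obtain ⟨y, rfl⟩ := Ideal.mem_span_singleton.mp (hI hxI)
  have hy : IsUnit y := (hπ y).resolve_right fun hπy =>
    hx (Ideal.mem_span_singleton.mpr (pow_succ π n ▸ mul_dvd_mul_left _ hπy))
  refine Or.inl (le_antisymm hI ?_)
  rwa [← Ideal.span_singleton_mul_right_unit hy, Ideal.span_singleton_le_iff_mem]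

theorem Ideal.exists_eq_span_pow_of_isUnit_or_dvd (hπ : ∀ x : R, IsUnit x ∨ π ∣ x)
    (hnil : IsNilpotent π) (I : Ideal R) : ∃ n, I = Ideal.span {π ^ n} := by
  obtain ⟨N, hN⟩ := hnil
  have key : ∀ n, (∃ m, I = Ideal.span {π ^ m}) ∨ I ≤ Ideal.span {π ^ n} := by
    intro n
    induction n with
    | zero => simp
    | succ n ih =>
      rcases ih with h | h
      · exact Or.inl h
      · exact (eq_span_pow_or_le_span_pow_succ hπ h).imp (⟨n, ·⟩) id
  refine (key N).elim id fun h => ⟨N, le_antisymm h ?_⟩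
  simp [hN]

theorem Ideal.span_pow_succ_lt_span_pow (hnil : IsNilpotent π) {n : ℕ} (h : π ^ n ≠ 0) :
    Ideal.span {π ^ (n + 1)} < Ideal.span {π ^ n} := by
  refine lt_of_le_of_ne (Ideal.span_singleton_le_span_singleton.mpr (pow_dvd_pow π n.le_succ))
    fun heq => h ?_
  obtain ⟨r, hr⟩ := Ideal.span_singleton_le_span_singleton.mp heq.ge
  have hu : IsUnit (1 - π * r) := ((Commute.all π r).isNilpotent_mul_right hnil).isUnit_one_sub
  exact hu.mul_left_eq_zero.mp (by linear_combination hr)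

end NilpotentPrincipalMaximal

namespace AdjoinRoot

variable {R : Type*} [CommRing R]

theorem exists_eq_of_add_root_mul (g : R[X]) (x : AdjoinRoot g) :
    ∃ c y, x = of g c + root g * y := by
  obtain ⟨f, rfl⟩ := mk_surjective x
  refine ⟨f.coeff 0, mk g f.divX, ?_⟩
  nth_rewrite 1 [← X_mul_divX_add f]
  rw [map_add, map_mul, mk_X, mk_C, add_comm]

theorem of_mul_root_ne_zero [Nontrivial R] {g : R[X]} (hg : g.Monic) (hdeg : 1 < g.degree)
    {c : R} (hc : c ≠ 0) : of g c * root g ≠ 0 := by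
  intro h
  have hmod := congrArg (modByMonicHom hg) h
  rw [← mk_C, ← mk_X, ← map_mul, modByMonicHom_mk, map_zero,
    (modByMonic_eq_self_iff hg).mpr (degree_C_mul_X_le c |>.trans_lt hdeg)] at hmod
  exact hc (by simpa using congrArg (coeff · 1) hmod)

end AdjoinRoot

instance : Fact (1 < 4) := ⟨by norm_num⟩

lemma wPoly_monic (a b : Z4) : (wPoly a b).Monic :=
  monic_X_pow_sub (degree_linear_le.trans_lt (by decide))

lemma one_lt_degree_wPoly (a b : Z4) : 1 < (wPoly a b).degree := by
  rw [wPoly, degree_sub_eq_left_of_degree_lt] <;> rw [degree_X_pow]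
  · decide
  · exact degree_linear_le.trans_lt (by decide)

lemma ww_sq (a b : Z4) :
    ww a b ^ 2 = algebraMap Z4 (Rw a b) b * ww a b + algebraMap Z4 (Rw a b) a := by
  have h : AdjoinRoot.mk (wPoly a b) (X ^ 2 - (C b * X + C a)) = 0 := AdjoinRoot.mk_self
  rw [map_sub, sub_eq_zero] at h
  simpa [ww, AdjoinRoot.algebraMap_eq] using h

lemma Rw.four_eq_zero (a b : Z4) : (4 : Rw a b) = 0 := by
  rw [← map_ofNat (algebraMap Z4 (Rw a b)) 4, show (4 : Z4) = 0 by decide, map_zero]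

section ThetaTwo

variable (c : Z4)

lemma ww_sq_eq_two_mul :
    ww 2 (2 * c) ^ 2 = 2 * (1 + algebraMap Z4 (Rw 2 (2 * c)) c * ww 2 (2 * c)) := by
  rw [ww_sq, map_mul, map_ofNat]
  ring

lemma ww_dvd_two : ww 2 (2 * c) ∣ 2 :=
  ⟨ww 2 (2 * c) - 2 * algebraMap Z4 _ c, by linear_combination -ww_sq_eq_two_mul c⟩

lemma ww_pow_three : ww 2 (2 * c) ^ 3 = 2 * ww 2 (2 * c) := by
  set γ := algebraMap Z4 (Rw 2 (2 * c)) c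
  linear_combination (ww 2 (2 * c) + 2 * γ) * ww_sq_eq_two_mul c +
    (γ + γ ^ 2 * ww 2 (2 * c)) * Rw.four_eq_zero 2 (2 * c)

lemma ww_pow_four : ww 2 (2 * c) ^ 4 = 0 := by
  linear_combination ww 2 (2 * c) * ww_pow_three c + 2 * ww_sq_eq_two_mul c +
    (1 + algebraMap Z4 (Rw 2 (2 * c)) c * ww 2 (2 * c)) * Rw.four_eq_zero 2 (2 * c)

lemma isNilpotent_ww : IsNilpotent (ww 2 (2 * c)) := ⟨4, ww_pow_four c⟩

lemma ww_pow_three_ne_zero : ww 2 (2 * c) ^ 3 ≠ 0 := by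
  rw [ww_pow_three, ← map_ofNat (AdjoinRoot.of (wPoly 2 (2 * c))) 2]
  exact AdjoinRoot.of_mul_root_ne_zero (wPoly_monic _ _) (one_lt_degree_wPoly _ _) (by decide)

lemma isUnit_or_ww_dvd (x : Rw 2 (2 * c)) : IsUnit x ∨ ww 2 (2 * c) ∣ x := by
  obtain ⟨d, y, rfl⟩ := AdjoinRoot.exists_eq_of_add_root_mul _ x
  obtain ⟨e, hde⟩ | ⟨s, rfl⟩ : (∃ e, d * e = 1) ∨ ∃ s, d = 2 * s := by revert d; decide
  · left
    exact ((Commute.all _ _).isNilpotent_mul_right (isNilpotent_ww c)).isUnit_add_left_of_commute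
      ((IsUnit.of_mul_eq_one e hde).map _) (Commute.all _ _)
  · right
    rw [map_mul, map_ofNat]
    exact dvd_add (dvd_mul_of_dvd_left (ww_dvd_two c) _) (dvd_mul_right _ _)

lemma span_mul_one_add_of_ww_dvd (x : Rw 2 (2 * c)) {y : Rw 2 (2 * c)} (hy : ww 2 (2 * c) ∣ y) :
    Ideal.span {x * (1 + y)} = Ideal.span {x} := by
  obtain ⟨z, rfl⟩ := hy
  exact Ideal.span_singleton_mul_right_unit
    ((Commute.all _ _).isNilpotent_mul_right (isNilpotent_ww c)).isUnit_one_add x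

lemma span_ww_sq : Ideal.span {ww 2 (2 * c) ^ 2} = Ideal.span {2} := by
  rw [ww_sq_eq_two_mul, span_mul_one_add_of_ww_dvd c _ (dvd_mul_left _ _)]

lemma span_two_eq_span_two_add_two_mul_ww :
    Ideal.span {(2 : Rw 2 (2 * c))} = Ideal.span {2 + 2 * ww 2 (2 * c)} := by
  rw [show (2 : Rw 2 (2 * c)) + 2 * ww 2 (2 * c) = 2 * (1 + ww 2 (2 * c)) by ring,
    span_mul_one_add_of_ww_dvd c _ dvd_rfl]

lemma span_ww_eq_span_three_mul_ww :
    Ideal.span {ww 2 (2 * c)} = Ideal.span {3 * ww 2 (2 * c)} := by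
  rw [show 3 * ww 2 (2 * c) = ww 2 (2 * c) * (1 + 2) by ring,
    span_mul_one_add_of_ww_dvd c _ (ww_dvd_two c)]

lemma span_ww_eq_span_two_add_ww :
    Ideal.span {ww 2 (2 * c)} = Ideal.span {2 + ww 2 (2 * c)} := by
  set γ := algebraMap Z4 (Rw 2 (2 * c)) c
  rw [show 2 + ww 2 (2 * c) = ww 2 (2 * c) * (1 + (ww 2 (2 * c) - 2 * γ)) by
      linear_combination -ww_sq_eq_two_mul c,
    span_mul_one_add_of_ww_dvd c _ (dvd_sub dvd_rfl (dvd_mul_of_dvd_left (ww_dvd_two c) _))]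

lemma span_ww_eq_span_two_add_three_mul_ww :
    Ideal.span {ww 2 (2 * c)} = Ideal.span {2 + 3 * ww 2 (2 * c)} := by
  set γ := algebraMap Z4 (Rw 2 (2 * c)) c
  rw [show 2 + 3 * ww 2 (2 * c) = ww 2 (2 * c) * (1 + (2 + ww 2 (2 * c) - 2 * γ)) by
      linear_combination -ww_sq_eq_two_mul c,
    span_mul_one_add_of_ww_dvd c _
      (dvd_sub (dvd_add (ww_dvd_two c) dvd_rfl) (dvd_mul_of_dvd_left (ww_dvd_two c) _))]

end ThetaTwo

/-- for θ = a + bw ∈ {2, 2+2w}, in R_θ one has (2) = (2+2w) and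
(w) = (3w) = (2+w) = (2+3w), and R_θ has exactly five ideals, forming the chain
(0) ⊊ (2w) ⊊ (2) ⊊ (w) ⊊ R_θ. -/
theorem ideals_of_Rw_theta_two_case (a b : Z4) (hab : (a = 2 ∧ b = 0) ∨ (a = 2 ∧ b = 2)) :
    Ideal.span {(2 : Rw a b)} = Ideal.span {2 + 2 * ww a b} ∧
    Ideal.span {ww a b} = Ideal.span {3 * ww a b} ∧
    Ideal.span {ww a b} = Ideal.span {2 + ww a b} ∧
    Ideal.span {ww a b} = Ideal.span {2 + 3 * ww a b} ∧
    (∀ I : Ideal (Rw a b),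
      I = ⊥ ∨ I = Ideal.span {2 * ww a b} ∨ I = Ideal.span {(2 : Rw a b)} ∨
      I = Ideal.span {ww a b} ∨ I = ⊤) ∧
    (⊥ : Ideal (Rw a b)) < Ideal.span {2 * ww a b} ∧
    Ideal.span {2 * ww a b} < Ideal.span {(2 : Rw a b)} ∧
    Ideal.span {(2 : Rw a b)} < Ideal.span {ww a b} ∧
    Ideal.span {ww a b} < (⊤ : Ideal (Rw a b)) := by
  obtain ⟨c, rfl, rfl⟩ : ∃ c : Z4, a = 2 ∧ b = 2 * c := by
    rcases hab with ⟨rfl, rfl⟩ | ⟨rfl, rfl⟩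
    exacts [⟨0, rfl, rfl⟩, ⟨1, rfl, rfl⟩]
  have h0 : (⊤ : Ideal (Rw 2 (2 * c))) = Ideal.span {ww 2 (2 * c) ^ 0} := by simp
  have h1 : Ideal.span {ww 2 (2 * c)} = Ideal.span {ww 2 (2 * c) ^ 1} := by rw [pow_one]
  have h2 : Ideal.span {(2 : Rw 2 (2 * c))} = Ideal.span {ww 2 (2 * c) ^ 2} := (span_ww_sq c).symm
  have h3 : Ideal.span {2 * ww 2 (2 * c)} = Ideal.span {ww 2 (2 * c) ^ 3} := by rw [ww_pow_three]
  have h4 : (⊥ : Ideal (Rw 2 (2 * c))) = Ideal.span {ww 2 (2 * c) ^ 4} := by simp [ww_pow_four]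
  have hlt : ∀ n ≤ 3, Ideal.span {ww 2 (2 * c) ^ (n + 1)} < Ideal.span {ww 2 (2 * c) ^ n} :=
    fun n hn => Ideal.span_pow_succ_lt_span_pow (isNilpotent_ww c)
      fun h => ww_pow_three_ne_zero c (pow_eq_zero_of_le hn h)
  refine ⟨span_two_eq_span_two_add_two_mul_ww c, span_ww_eq_span_three_mul_ww c,
    span_ww_eq_span_two_add_ww c, span_ww_eq_span_two_add_three_mul_ww c, fun I => ?_,
    h4 ▸ h3 ▸ hlt 3 le_rfl, h3 ▸ h2 ▸ hlt 2 (by norm_num), h2 ▸ h1 ▸ hlt 1 (by norm_num),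
    h1 ▸ h0 ▸ hlt 0 (by norm_num)⟩
  obtain ⟨n, rfl⟩ :=
    Ideal.exists_eq_span_pow_of_isUnit_or_dvd (isUnit_or_ww_dvd c) (isNilpotent_ww c) I
  rcases n with _ | _ | _ | _ | n
  · exact .inr <| .inr <| .inr <| .inr h0.symm
  · exact .inr <| .inr <| .inr <| .inl h1.symm
  · exact .inr <| .inr <| .inl h2.symm
  · exact .inr <| .inl h3.symm
  · exact .inl (by simp [pow_eq_zero_of_le (Nat.le_add_left 4 n) (ww_pow_four c)])
end

section
/- Let (a,b) ∈ {(2,0), (2,2)} ⊆ (ℤ/4ℤ)², i.e., θ = a + bw ∈ {2, 2+2w}, and R = R_θ, and let n ≥ 1. If C ⊆ Rⁿ is a self-dual linear code (C = C^⊥), then the all-2w vector (2w, 2w, …, 2w) belongs to C. -/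
open Polynomial

/-!
When `2a = 2b = 0` the element `2w` annihilates the maximal ideal `(2, w)` (as `2w·w = 2a + 2bw`),
so multiplication by `2w` factors through the residue field `𝔽₂`, where `x² = x`.
Hence `2w · x² = 2w · x` for every `x`, and for a self-orthogonal `y` this gives
`∑ 2w · yᵢ = 2w · ∑ yᵢ² = 0`: the all-`2w` vector lies in `C^⊥ = C`.
-/

theorem sum_mul_eq_zero_of_sum_mul_self_eq_zero {R ι : Type*} [CommSemiring R] [Fintype ι]
    {e : R} (he : ∀ x, e * (x * x) = e * x) {y : ι → R} (hy : ∑ i, y i * y i = 0) :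
    ∑ i, e * y i = 0 := by
  calc ∑ i, e * y i = e * ∑ i, y i * y i := by simp only [Finset.mul_sum, he]
    _ = 0 := by rw [hy, mul_zero]

namespace Rw

variable {a b : Z4}

theorem ww_sq : ww a b ^ 2 = AdjoinRoot.of _ b * ww a b + AdjoinRoot.of _ a := by
  have h := AdjoinRoot.mk_self (f := wPoly a b)
  rwa [wPoly, map_sub, sub_eq_zero, map_add, map_mul, map_pow, AdjoinRoot.mk_X,
    AdjoinRoot.mk_C, AdjoinRoot.mk_C] at h

theorem exists_eq_add_ww_mul (x : Rw a b) : ∃ c z, x = AdjoinRoot.of _ c + ww a b * z := by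
  obtain ⟨p, rfl⟩ := AdjoinRoot.mk_surjective x
  refine ⟨p.coeff 0, AdjoinRoot.mk _ p.divX, ?_⟩
  conv_lhs => rw [← X_mul_divX_add p]
  rw [map_add, map_mul, AdjoinRoot.mk_X, AdjoinRoot.mk_C, add_comm]
  rfl

theorem two_mul_ww_mul_ww (h2a : 2 * a = 0) (h2b : 2 * b = 0) :
    2 * ww a b * ww a b = 0 := by
  rw [mul_assoc, ← sq, ww_sq, mul_add, ← mul_assoc, ← map_ofNat (AdjoinRoot.of _) 2,
    ← map_mul, ← map_mul, h2a, h2b, map_zero, zero_mul, add_zero]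

theorem two_mul_ww_mul_self (h2a : 2 * a = 0) (h2b : 2 * b = 0) (x : Rw a b) :
    2 * ww a b * (x * x) = 2 * ww a b * x := by
  obtain ⟨c, z, rfl⟩ := exists_eq_add_ww_mul x
  have hw := two_mul_ww_mul_ww h2a h2b
  have hc : (2 : Z4) * (c * c) = 2 * c := by revert c; decide
  calc 2 * ww a b * ((AdjoinRoot.of _ c + ww a b * z) * (AdjoinRoot.of _ c + ww a b * z))
      = ww a b * AdjoinRoot.of _ (2 * (c * c))
        + 2 * ww a b * ww a b * (2 * AdjoinRoot.of _ c * z + ww a b * z * z) := by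
        simp only [map_mul, map_ofNat]; ring
    _ = ww a b * AdjoinRoot.of _ (2 * c) + 2 * ww a b * ww a b * z := by
        rw [hc, hw, zero_mul, zero_mul]
    _ = 2 * ww a b * (AdjoinRoot.of _ c + ww a b * z) := by
        simp only [map_mul, map_ofNat]; ring

end Rw

theorem self_dual_contains_all_two_w_general (a b : Z4) (hab : (a = 2 ∧ b = 0) ∨ (a = 2 ∧ b = 2))
    (n : ℕ) (C : Submodule (Rw a b) (Fin n → Rw a b))
    (hsd : ∀ x : Fin n → Rw a b, x ∈ C ↔ ∀ y ∈ C, ∑ i, x i * y i = 0) :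
    (fun _ : Fin n => 2 * ww a b) ∈ C := by
  obtain ⟨h2a, h2b⟩ : 2 * a = 0 ∧ 2 * b = 0 := by
    rcases hab with ⟨rfl, rfl⟩ | ⟨rfl, rfl⟩ <;> decide
  refine (hsd _).2 fun y hy => ?_
  exact sum_mul_eq_zero_of_sum_mul_self_eq_zero (Rw.two_mul_ww_mul_self h2a h2b)
    ((hsd y).1 hy y hy)

/-- for θ = a + bw ∈ {2, 2+2w}, every self-dual linear code C ⊆ Rⁿ
contains the all-2w vector. -/
theorem self_dual_contains_all_two_w (a b : Z4) (hab : (a = 2 ∧ b = 0) ∨ (a = 2 ∧ b = 2))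
    (n : ℕ) (hn : 1 ≤ n) (C : Submodule (Rw a b) (Fin n → Rw a b))
    (hsd : ∀ x : Fin n → Rw a b, x ∈ C ↔ ∀ y ∈ C, ∑ i, x i * y i = 0) :
    (fun _ : Fin n => 2 * ww a b) ∈ C :=
  self_dual_contains_all_two_w_general a b hab n C hsd
end

section
/- (Sphere Packing-like Bound) Let n ≥ 1 and let d be an integer with 1 ≤ d ≤ 2n+1. If C ⊆ Σⁿ is a code with minimum Gau distance at least d, then |C| · Σ_{r=0}^{⌊(d−1)/2⌋} Σ_{i=0}^{⌊r/2⌋} n!/(i!·(r−2i)!·(n−r+i)!) · 9^i · 6^{r−2i} ≤ 16ⁿ. -/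
/-- The DNA pair alphabet Σ = Fin 4 × Fin 4 (A,G,C,T encoded as 0,1,2,3). -/
abbrev Sig := Fin 4 × Fin 4

/-- The Gau distance on Σⁿ:
d_G(x,y) = Σⱼ (δ(xⱼ.1, yⱼ.1) + δ(xⱼ.2, yⱼ.2)), where δ(u,v) = 0 if u = v, else 1. -/
def dG (n : ℕ) (x y : Fin n → Sig) : ℕ :=
  ∑ j, ((if (x j).1 = (y j).1 then 0 else 1) + (if (x j).2 = (y j).2 then 0 else 1))

/-! Σⁿ is an abelian group and `dG n x y` is the weight of `x - y`, so the balls of radius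
`t = ⌊(d - 1)/2⌋` around the codewords are disjoint translates of the ball around `0`, and
`|C| · |ball| ≤ 16ⁿ`. A letter has weight 0, 1 or 2 in 1, 6 and 9 ways, so the weight
enumerator of Σⁿ is `(1 + 6X + 9X²)ⁿ`; expanding it as `(9X² + (1 + 6X))ⁿ` gives the number
of words of weight `r` as the inner sum of the bound. -/

open Finset Polynomial
open scoped Nat

theorem card_mul_card_filter_le_card {G : Type*} [AddCommGroup G] [Fintype G] [DecidableEq G]
    (w : G → ℕ) (hw : ∀ a b, w (a - b) ≤ w a + w b) (C : Finset G) (t : ℕ)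
    (hC : ∀ x ∈ C, ∀ y ∈ C, x ≠ y → 2 * t < w (x - y)) :
    #C * #{z | w z ≤ t} ≤ Fintype.card G := by
  set B : Finset G := {z | w z ≤ t}
  have hinj : Set.InjOn (fun p : G × G => p.1 + p.2) ↑(C ×ˢ B) := by
    rintro ⟨x₁, z₁⟩ h₁ ⟨x₂, z₂⟩ h₂ (hsum : x₁ + z₁ = x₂ + z₂)
    simp only [coe_product, Set.mem_prod, mem_coe, B, mem_filter_univ] at h₁ h₂
    obtain rfl : x₁ = x₂ := by
      by_contra hne
      have hdiff : x₁ - x₂ = z₂ - z₁ := sub_eq_sub_iff_add_eq_add.mpr (by rw [hsum, add_comm])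
      have hfar := hC x₁ h₁.1 x₂ h₂.1 hne
      rw [hdiff] at hfar
      have htri := hw z₂ z₁
      omega
    rw [add_left_cancel hsum]
  calc #C * #B = #((C ×ˢ B).image fun p => p.1 + p.2) := by
        rw [card_image_of_injOn hinj, card_product]
    _ ≤ Fintype.card G := card_le_univ _

theorem card_filter_eq_coeff_sum_X_pow {α : Type*} (s : Finset α) (f : α → ℕ) (r : ℕ) :
    #{a ∈ s | f a = r} = (∑ a ∈ s, (X : ℕ[X]) ^ f a).coeff r := by
  simp only [finsetSum_coeff, coeff_X_pow, eq_comm (a := r), sum_boole, Nat.cast_id]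

theorem card_filter_le_eq_sum_card_filter_eq {α : Type*} [Fintype α] (f : α → ℕ) (t : ℕ) :
    #{a | f a ≤ t} = ∑ r ∈ Icc 0 t, #{a | f a = r} := by
  rw [card_eq_sum_card_fiberwise (f := f) (t := Icc 0 t) fun a ha => by simpa using ha]
  refine sum_congr rfl fun r hr => ?_
  rw [filter_filter]
  exact congrArg card <| filter_congr fun a _ =>
    and_iff_right_of_imp fun ha => ha ▸ (mem_Icc.mp hr).2

theorem sum_X_pow_sum_eq_pow {ι β R : Type*} [Fintype ι] [DecidableEq ι] [Fintype β]
    [CommSemiring R] (g : β → ℕ) :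
    ∑ z : ι → β, (X : R[X]) ^ (∑ j, g (z j)) = (∑ b, (X : R[X]) ^ g b) ^ Fintype.card ι := by
  rw [← card_univ, ← prod_const, Fintype.prod_sum]
  simp only [prod_pow_eq_pow_sum]

theorem Polynomial.coeff_one_add_C_mul_X_pow {R : Type*} [CommSemiring R] (a : R) (m k : ℕ) :
    ((1 + C a * X) ^ m).coeff k = a ^ k * m.choose k := by
  have hterm : ∀ j, (C a * X) ^ j * 1 ^ (m - j) * (m.choose j : R[X]) =
      C (a ^ j * m.choose j) * X ^ j := by
    intro j
    simp only [mul_pow, one_pow, mul_one, C_mul, C_pow, map_natCast]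
    ring
  rw [add_comm, add_pow]
  simp only [hterm, finsetSum_coeff, coeff_C_mul_X_pow, sum_ite_eq, mem_range, ite_eq_left_iff,
    not_lt]
  intro hmk
  rw [Nat.choose_eq_zero_of_lt hmk, Nat.cast_zero, mul_zero]

theorem Polynomial.coeff_one_add_C_mul_X_add_C_mul_X_sq_pow {R : Type*} [CommSemiring R]
    (a b : R) (n r : ℕ) :
    ((1 + C a * X + C b * X ^ 2) ^ n).coeff r =
      ∑ i ∈ Icc 0 (r / 2), ((n.choose i * (n - i).choose (r - 2 * i) : ℕ) : R) *
        b ^ i * a ^ (r - 2 * i) := by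
  have hterm : ∀ i, (C b * X ^ 2) ^ i * (1 + C a * X) ^ (n - i) * (n.choose i : R[X]) =
      C (b ^ i * n.choose i) * (X ^ (2 * i) * (1 + C a * X) ^ (n - i)) := by
    intro i
    simp only [mul_pow, ← pow_mul, C_mul, C_pow, map_natCast]
    ring
  rw [add_comm, add_pow, finsetSum_coeff]
  simp only [hterm, coeff_C_mul, coeff_X_pow_mul', coeff_one_add_C_mul_X_pow, mul_ite, mul_zero,
    ← sum_filter]
  refine sum_subset (fun i hi => ?_) (fun i hi hi' => ?_) |>.trans (sum_congr rfl fun i _ => ?_)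
  · simp only [mem_filter, mem_range, mem_Icc] at hi ⊢
    omega
  · have hni : n < i := by
      simp only [mem_filter, mem_range, mem_Icc] at hi hi'
      omega
    rw [Nat.choose_eq_zero_of_lt hni, Nat.cast_zero, mul_zero, zero_mul]
  · push_cast
    ring

theorem Nat.factorial_div_factorial_mul_factorial_mul_factorial {i j k n : ℕ}
    (h : i + j + k = n) :
    n ! / (i ! * j ! * k !) = n.choose i * (n - i).choose j := by
  have hi := Nat.choose_mul_factorial_mul_factorial (n := n) (k := i) (by omega)
  have hj := Nat.choose_mul_factorial_mul_factorial (n := n - i) (k := j) (by omega)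
  rw [show n - i - j = k by omega] at hj
  have hn : n ! = n.choose i * (n - i).choose j * (i ! * j ! * k !) := by
    rw [← hi, ← hj]
    ring
  rw [hn, Nat.mul_div_cancel _ (by positivity)]

def letterWeight (s : Sig) : ℕ := (if s.1 = 0 then 0 else 1) + (if s.2 = 0 then 0 else 1)

def gauWeight {n : ℕ} (z : Fin n → Sig) : ℕ := ∑ j, letterWeight (z j)

theorem dG_eq_gauWeight_sub {n : ℕ} (x y : Fin n → Sig) : dG n x y = gauWeight (x - y) := by
  simp only [dG, gauWeight, letterWeight, Pi.sub_apply, Prod.fst_sub, Prod.snd_sub, sub_eq_zero]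

theorem letterWeight_sub_le :
    ∀ a b : Sig, letterWeight (a - b) ≤ letterWeight a + letterWeight b := by
  decide

theorem gauWeight_sub_le {n : ℕ} (a b : Fin n → Sig) :
    gauWeight (a - b) ≤ gauWeight a + gauWeight b := by
  rw [gauWeight, gauWeight, gauWeight, ← sum_add_distrib]
  exact sum_le_sum fun j _ => letterWeight_sub_le (a j) (b j)

theorem sum_X_pow_letterWeight :
    ∑ s : Sig, (X : ℕ[X]) ^ letterWeight s = 1 + C 6 * X + C 9 * X ^ 2 := by
  simp only [letterWeight, pow_add, Fintype.sum_prod_type, Fin.sum_univ_four]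
  simp only [Fin.isValue, Fin.reduceEq, if_true, if_false, pow_zero, pow_one, map_ofNat]
  ring

theorem card_filter_gauWeight_eq (n r : ℕ) :
    #{z : Fin n → Sig | gauWeight z = r} =
      ∑ i ∈ Icc 0 (r / 2), n.choose i * (n - i).choose (r - 2 * i) * 9 ^ i * 6 ^ (r - 2 * i) := by
  rw [card_filter_eq_coeff_sum_X_pow]
  unfold gauWeight
  rw [sum_X_pow_sum_eq_pow, sum_X_pow_letterWeight, Fintype.card_fin,
    coeff_one_add_C_mul_X_add_C_mul_X_sq_pow]
  simp only [Nat.cast_id]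

theorem gau_sphere_packing_bound_general (n d : ℕ) (hd1 : 1 ≤ d) (hd2 : d ≤ 2 * n + 1)
    (C : Finset (Fin n → Sig))
    (hC : ∀ x ∈ C, ∀ y ∈ C, x ≠ y → d ≤ dG n x y) :
    C.card *
        ∑ r ∈ Finset.Icc 0 ((d - 1) / 2), ∑ i ∈ Finset.Icc 0 (r / 2),
          n.factorial / (i.factorial * (r - 2 * i).factorial * (n + i - r).factorial) *
            9 ^ i * 6 ^ (r - 2 * i) ≤
      16 ^ n := by
  set t := (d - 1) / 2
  have hfar : ∀ x ∈ C, ∀ y ∈ C, x ≠ y → 2 * t < gauWeight (x - y) := fun x hx y hy hxy => by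
    have hd := hC x hx y hy hxy
    rw [dG_eq_gauWeight_sub] at hd
    omega
  have hball : ∑ r ∈ Icc 0 t, ∑ i ∈ Icc 0 (r / 2),
      n ! / (i ! * (r - 2 * i)! * (n + i - r)!) * 9 ^ i * 6 ^ (r - 2 * i) =
      #{z : Fin n → Sig | gauWeight z ≤ t} := by
    rw [card_filter_le_eq_sum_card_filter_eq]
    refine sum_congr rfl fun r hr => ?_
    rw [card_filter_gauWeight_eq]
    refine sum_congr rfl fun i hi => ?_
    simp only [mem_Icc] at hr hi
    rw [Nat.factorial_div_factorial_mul_factorial_mul_factorial (by omega)]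
  calc C.card * _ = #C * #{z : Fin n → Sig | gauWeight z ≤ t} := by rw [hball]
    _ ≤ 16 ^ n := by
      simpa using card_mul_card_filter_le_card gauWeight gauWeight_sub_le C t hfar

/-- Sphere Packing-like bound: if C ⊆ Σⁿ has minimum Gau distance ≥ d then
|C| · Σ_{r=0}^{⌊(d−1)/2⌋} Σ_{i=0}^{⌊r/2⌋} n!/(i!·(r−2i)!·(n−r+i)!)·9^i·6^{r−2i} ≤ 16ⁿ. -/
theorem gau_sphere_packing_bound (n d : ℕ) (hn : 1 ≤ n) (hd1 : 1 ≤ d) (hd2 : d ≤ 2 * n + 1)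
    (C : Finset (Fin n → Sig))
    (hC : ∀ x ∈ C, ∀ y ∈ C, x ≠ y → d ≤ dG n x y) :
    C.card *
        ∑ r ∈ Finset.Icc 0 ((d - 1) / 2), ∑ i ∈ Finset.Icc 0 (r / 2),
          n.factorial / (i.factorial * (r - 2 * i).factorial * (n + i - r).factorial) *
            9 ^ i * 6 ^ (r - 2 * i) ≤
      16 ^ n :=
  gau_sphere_packing_bound_general n d hd1 hd2 C hC
end
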